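/- arXiv:2205.01148 — 4 statements merged into one kernel-verified Lean document; each statement's English description precedes it below -/
import Mathlib

section
/- Under the same assumptions (kₙ/∑_{i=0}^n kᵢ → a ∈ (0,1], τ₀/kₙ → b ≥ 0, τₙ = (τ₀−1)∑_{i=0}^{n−1}kᵢ + τ₀ with τ₀ ≥ 2), the ratio τₙ₋₁/τₙ converges to 1 − (τ₀−1)/γ where γ = (τ₀−1)/a + b. -/
open Filter

theorem stmt_2 (τ0 : ℕ) (hτ0 : 2 ≤ τ0) (k : ℕ → ℕ) (hk : ∀ n, 0 < k n)
    (τ : ℕ → ℕ)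
    (hτ : ∀ n, τ n = (τ0 - 1) * (∑ i ∈ Finset.range n, k i) + τ0)
    (a b : ℝ) (ha : 0 < a) (ha1 : a ≤ 1) (hb : 0 ≤ b)
    (hR2 : Tendsto (fun n => (k n : ℝ) / ∑ i ∈ Finset.range (n + 1), (k i : ℝ))
      atTop (nhds a))
    (hR3 : Tendsto (fun n => (τ0 : ℝ) / (k n : ℝ)) atTop (nhds b)) :
    Tendsto (fun n => (τ n : ℝ) / (τ (n + 1) : ℝ)) atTop
      (nhds (1 - ((τ0 : ℝ) - 1) / (((τ0 : ℝ) - 1) / a + b))) := by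
  have hτ0' : (1 : ℕ) ≤ τ0 := le_trans (by norm_num) hτ0
  set c : ℝ := (τ0 : ℝ) - 1 with hc
  have hc1 : 1 ≤ c := by
    have : (2 : ℝ) ≤ (τ0 : ℝ) := by exact_mod_cast hτ0
    simp [hc]; linarith
  set γ : ℝ := c / a + b with hγdef
  have hγ : 0 < γ := by
    have : 0 < c / a := div_pos (by linarith) ha
    simp [hγdef]; linarith
  -- cast of τ
  have hτR : ∀ n, (τ n : ℝ) = c * (∑ i ∈ Finset.range n, (k i : ℝ)) + τ0 := by
    intro n
    rw [hτ n]
    push_cast [Nat.cast_sub hτ0']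
    ring
  have hkne : ∀ n, (k n : ℝ) ≠ 0 := fun n => by
    exact_mod_cast (hk n).ne'
  -- S_{n+1} / k n → a⁻¹
  have h1 : Tendsto (fun n => (∑ i ∈ Finset.range (n + 1), (k i : ℝ)) / (k n : ℝ))
      atTop (nhds a⁻¹) := by
    have := hR2.inv₀ ha.ne'
    simpa [inv_div] using this
  -- τ(n+1)/k n → γ
  have h2 : Tendsto (fun n => (τ (n + 1) : ℝ) / (k n : ℝ)) atTop (nhds γ) := by
    have h := (h1.const_mul c).add hR3
    have heq : (fun n => c * ((∑ i ∈ Finset.range (n + 1), (k i : ℝ)) / (k n : ℝ))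
        + (τ0 : ℝ) / (k n : ℝ)) = fun n => (τ (n + 1) : ℝ) / (k n : ℝ) := by
      funext n
      rw [hτR (n + 1)]
      field_simp
    rw [heq] at h
    have : c * a⁻¹ + b = γ := by rw [hγdef, div_eq_mul_inv]
    rwa [this] at h
  -- k n / τ(n+1) → γ⁻¹
  have h3 : Tendsto (fun n => (k n : ℝ) / (τ (n + 1) : ℝ)) atTop (nhds γ⁻¹) := by
    have := h2.inv₀ hγ.ne'
    simpa [inv_div] using this
  have h4 : Tendsto (fun n => 1 - c * ((k n : ℝ) / (τ (n + 1) : ℝ))) atTop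
      (nhds (1 - c * γ⁻¹)) :=
    tendsto_const_nhds.sub (h3.const_mul c)
  have hlim : 1 - c * γ⁻¹ = 1 - c / γ := by rw [div_eq_mul_inv]
  rw [hlim] at h4
  have hτpos : ∀ n, (0 : ℝ) < (τ n : ℝ) := by
    intro n
    have : 0 < τ n := by
      rw [hτ n]; omega
    exact_mod_cast this
  have heq : (fun n => 1 - c * ((k n : ℝ) / (τ (n + 1) : ℝ)))
      = fun n => (τ n : ℝ) / (τ (n + 1) : ℝ) := by
    funext n
    have hne := (hτpos (n + 1)).ne'
    have hsum : (τ (n + 1) : ℝ) = (τ n : ℝ) + c * (k n : ℝ) := by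
      rw [hτR n, hτR (n + 1), Finset.sum_range_succ]
      ring
    field_simp
    rw [hsum]; ring
  rwa [heq] at h4
end

section
/- With cₙ as above (c₀ = 0, cₙ₊₁ = ((τₙ₊₁ − τ₀kₙ)/τₙ₊₁)cₙ + kₙ/τₙ₊₁, τₙ₊₁ = τₙ + kₙ(τ₀−1), τ₀ ≥ 2, kₙ ≥ 1), one has |cₙ − 1/τ₀| ≤ 1/τₙ for all n ≥ 0; in particular cₙ → 1/τ₀ as n → ∞. -/
open Filter

theorem stmt_11 (τ0 : ℕ) (hτ0 : 2 ≤ τ0) (k τ : ℕ → ℕ)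
    (hk : ∀ n, 1 ≤ k n) (hkτ : ∀ n, k n ≤ τ n)
    (h0 : τ 0 = τ0) (hrec : ∀ n, τ (n + 1) = τ n + k n * (τ0 - 1))
    (c : ℕ → ℝ) (hc0 : c 0 = 0)
    (hcrec : ∀ n, c (n + 1) =
        (((τ (n + 1) : ℝ) - (τ0 : ℝ) * (k n : ℝ)) / (τ (n + 1) : ℝ)) * c n
        + (k n : ℝ) / (τ (n + 1) : ℝ)) :
    (∀ n, |c n - 1 / (τ0 : ℝ)| ≤ 1 / (τ n : ℝ)) ∧
      Tendsto c atTop (nhds (1 / (τ0 : ℝ))) := by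
  have hτgrow : ∀ n, n + 2 ≤ τ n := by
    intro n
    induction n with
    | zero => simpa [h0] using hτ0
    | succ m ih =>
        have : 1 ≤ k m * (τ0 - 1) := Nat.one_le_iff_ne_zero.mpr (by
          have := hk m; have : 1 ≤ τ0 - 1 := by omega
          exact Nat.mul_ne_zero (by omega) (by omega))
        rw [hrec m]; omega
  have hτpos : ∀ n, (0 : ℝ) < (τ n : ℝ) := by
    intro n
    have := hτgrow n
    exact_mod_cast Nat.lt_of_lt_of_le (by omega) this
  have hτ0pos : (0 : ℝ) < (τ0 : ℝ) := by exact_mod_cast Nat.lt_of_lt_of_le (by omega) hτ0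
  have hbound : ∀ n, |c n - 1 / (τ0 : ℝ)| ≤ 1 / (τ n : ℝ) := by
    intro n
    induction n with
    | zero =>
        rw [hc0, h0, zero_sub, abs_neg, abs_of_nonneg (by positivity)]
    | succ m ih =>
        have hτs : (0 : ℝ) < (τ (m+1) : ℝ) := hτpos (m+1)
        have hτm : (0 : ℝ) < (τ m : ℝ) := hτpos m
        -- key identity
        have hkey : c (m+1) - 1 / (τ0 : ℝ)
            = (((τ (m+1) : ℝ) - (τ0 : ℝ) * (k m : ℝ)) / (τ (m+1) : ℝ)) * (c m - 1 / (τ0 : ℝ)) := by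
          rw [hcrec m]
          field_simp
          ring
        have hdiff : ((τ (m+1) : ℝ) - (τ0 : ℝ) * (k m : ℝ)) = (τ m : ℝ) - (k m : ℝ) := by
          have := hrec m
          have h1 : (τ (m+1) : ℝ) = (τ m : ℝ) + (k m : ℝ) * ((τ0 : ℝ) - 1) := by
            rw [this]
            push_cast [Nat.cast_sub (by omega : 1 ≤ τ0)]
            ring
          rw [h1]; ring
        have hnn : (0 : ℝ) ≤ (τ m : ℝ) - (k m : ℝ) := by
          have := hkτ m; simp; exact_mod_cast this
        rw [hkey, hdiff, abs_mul, abs_div, abs_of_nonneg hnn,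
          abs_of_pos hτs]
        calc ((τ m : ℝ) - (k m : ℝ)) / (τ (m+1) : ℝ) * |c m - 1 / (τ0 : ℝ)|
            ≤ ((τ m : ℝ) - (k m : ℝ)) / (τ (m+1) : ℝ) * (1 / (τ m : ℝ)) := by
              apply mul_le_mul_of_nonneg_left ih (by positivity)
          _ ≤ 1 / (τ (m+1) : ℝ) := by
              rw [div_mul_div_comm, mul_one, div_le_div_iff₀ (by positivity) hτs]
              have hkm : (0 : ℝ) < (k m : ℝ) := by exact_mod_cast hk m
              nlinarith
  refine ⟨hbound, ?_⟩
  have hinf : Tendsto (fun n => (τ n : ℝ)) atTop atTop := by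
    apply tendsto_atTop_mono (fun n => ?_)
      (tendsto_atTop_add_const_right _ (2:ℝ) tendsto_natCast_atTop_atTop)
    exact_mod_cast hτgrow n
  have htend : Tendsto (fun n => (1 : ℝ) / (τ n : ℝ)) atTop (nhds 0) := by
    simpa [one_div, Pi.inv_def] using hinf.inv_tendsto_atTop
  have : Tendsto (fun n => c n - 1 / (τ0 : ℝ)) atTop (nhds 0) := by
    apply squeeze_zero_norm (fun n => ?_) htend
    simpa using hbound n
  have := this.add_const (1 / (τ0 : ℝ))
  simpa using this
end

section
/- Let tₙ := E[Tₙ] satisfy tₙ = (1 + (τ₀−1)kₙ₋₁/τₙ₋₁)·tₙ₋₁ + T₀·kₙ₋₁ with t₀ = T₀, where τₙ = τₙ₋₁ + kₙ₋₁(τ₀−1). Then tₙ = T₀·τₙ·(∑_{i=1}^{n} kᵢ₋₁/τᵢ + 1/τ₀). -/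
theorem stmt_14 (τ0 : ℕ) (hτ0 : 2 ≤ τ0) (k τ : ℕ → ℕ) (hk : ∀ n, 0 < k n)
    (h0 : τ 0 = τ0) (hrec : ∀ n, τ (n + 1) = τ n + k n * (τ0 - 1))
    (T0 : ℝ) (t : ℕ → ℝ) (ht0 : t 0 = T0)
    (htrec : ∀ n, 1 ≤ n →
      t n = (1 + ((τ0 : ℝ) - 1) * (k (n - 1) : ℝ) / (τ (n - 1) : ℝ)) * t (n - 1)
            + T0 * (k (n - 1) : ℝ)) :
    ∀ n, t n = T0 * (τ n : ℝ) *
      ((∑ i ∈ Finset.Icc 1 n, (k (i - 1) : ℝ) / (τ i : ℝ)) + 1 / (τ0 : ℝ)) := by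
  have hτpos : ∀ n, 0 < τ n := by
    intro n
    induction n with
    | zero => omega
    | succ m ih => rw [hrec]; omega
  have hτ0ne : (τ0 : ℝ) ≠ 0 := by positivity
  have hτne : ∀ n, (τ n : ℝ) ≠ 0 := fun n => by
    exact_mod_cast (hτpos n).ne'
  intro n
  induction n with
  | zero =>
    simp [h0, ht0, Finset.Icc_self]
    field_simp
  | succ m ih =>
    have hcast : (τ (m + 1) : ℝ) = (τ m : ℝ) + (k m : ℝ) * ((τ0 : ℝ) - 1) := by
      rw [hrec]
      push_cast [Nat.cast_sub (by omega : 1 ≤ τ0)]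
      ring
    have ht := htrec (m + 1) (by omega)
    simp only [Nat.add_sub_cancel] at ht
    rw [ht, ih, Finset.sum_Icc_succ_top (by omega : 1 ≤ m + 1)]
    simp only [Nat.add_sub_cancel]
    have h1 : (1 + ((τ0 : ℝ) - 1) * (k m : ℝ) / (τ m : ℝ)) = (τ (m + 1) : ℝ) / (τ m : ℝ) := by
      rw [hcast]; field_simp [hτne m]
    rw [h1]
    set S := ∑ i ∈ Finset.Icc 1 m, (k (i - 1) : ℝ) / (τ i : ℝ) with hS
    have e1 : (τ (m+1) : ℝ) / (τ m : ℝ) * (T0 * (τ m : ℝ) * (S + 1 / (τ0 : ℝ)))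
        = T0 * (τ (m+1) : ℝ) * (S + 1 / (τ0 : ℝ)) := by
      field_simp [hτne m]
    have e2 : T0 * (τ (m+1) : ℝ) * ((S + (k m : ℝ) / (τ (m+1) : ℝ)) + 1 / (τ0 : ℝ))
        = T0 * (τ (m+1) : ℝ) * (S + 1 / (τ0 : ℝ)) + T0 * (k m : ℝ) := by
      field_simp [hτne (m+1)]; ring
    rw [e1, e2]
end

section
/- In the constant case kₙ = k (so τᵢ = (τ₀−1)i + τ₀), the average depth E[Dₙ] = T₀·∑_{i=1}^{n} k/τᵢ + D₀ satisfies E[Dₙ] / ln n → T₀·k/(τ₀−1) as n → ∞. -/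
open Filter Finset

theorem stmt_16 (τ0 k : ℕ) (hτ0 : 2 ≤ τ0) (hk : 1 ≤ k)
    (τ : ℕ → ℕ) (hτ : ∀ i, τ i = (τ0 - 1) * i + τ0)
    (T0 D0 : ℝ) (hT0 : 0 < T0) (hD0 : D0 = T0 / (τ0 : ℝ))
    (ED : ℕ → ℝ)
    (hED : ∀ n, ED n = T0 * (∑ i ∈ Finset.Icc 1 n, (k : ℝ) / (τ i : ℝ)) + D0) :
    Tendsto (fun n : ℕ => ED n / Real.log n) atTop
      (nhds (T0 * (k : ℝ) / ((τ0 : ℝ) - 1))) := by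
  set a : ℝ := (τ0 : ℝ) - 1 with ha
  have ha1 : (1 : ℝ) ≤ a := by
    have : (2 : ℝ) ≤ (τ0 : ℝ) := by exact_mod_cast hτ0
    linarith
  have ha0 : (0 : ℝ) < a := by linarith
  have hτ0R : (0 : ℝ) < (τ0 : ℝ) := by positivity
  -- cast of τ
  have hτR : ∀ i : ℕ, ((τ i : ℝ)) = a * i + τ0 := by
    intro i
    rw [hτ i]
    push_cast [Nat.cast_sub (le_trans one_le_two hτ0)]
    ring
  -- the shifted difference sequence
  set d : ℕ → ℝ := fun j => (k : ℝ) / (a * (j + 1)) - (k : ℝ) / (a * (j + 1) + τ0) with hd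
  have hdpos : ∀ j : ℕ, (0:ℝ) < a * (j + 1) := by
    intro j; positivity
  have hdpos2 : ∀ j : ℕ, (0:ℝ) < a * (j + 1) + τ0 := by
    intro j; positivity
  have hdval : ∀ j : ℕ, d j = (k : ℝ) * τ0 / ((a * (j+1)) * (a * (j+1) + τ0)) := by
    intro j
    rw [hd]
    field_simp
    ring
  have hsum : Summable d := by
    refine Summable.of_nonneg_of_le (f := fun j : ℕ => ((k:ℝ) * (τ0:ℝ) / (a*a)) * (1 / ((j:ℝ)+1)^2)) ?_ ?_ ?_
    · intro j
      rw [hdval]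
      positivity
    · intro j
      rw [hdval]
      rw [div_le_iff₀ (by positivity)]
      have h1 : (a*a) * ((j:ℝ)+1)^2 ≤ (a * (j+1)) * (a * (j+1) + τ0) := by
        nlinarith [hdpos j, hτ0R]
      calc (k : ℝ) * τ0 = ((k:ℝ) * τ0 / (a*a) / ((j:ℝ)+1)^2) * ((a*a) * ((j:ℝ)+1)^2) := by
            field_simp
        _ ≤ ((k:ℝ) * τ0 / (a*a) / ((j:ℝ)+1)^2) * ((a * (j+1)) * (a * (j+1) + τ0)) := by
            apply mul_le_mul_of_nonneg_left h1 (by positivity)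
        _ = (k:ℝ) * τ0 / (a*a) * (1 / ((j:ℝ)+1)^2) * ((a * (j+1)) * (a * (j+1) + τ0)) := by
            ring
    · apply Summable.mul_left
      have := (summable_nat_add_iff (f := fun n : ℕ => 1 / (n:ℝ)^2) 1).2
        (Real.summable_one_div_nat_pow.2 one_lt_two)
      simpa using this
  set L : ℝ := ∑' j, d j with hL
  have hTconv : Tendsto (fun n => ∑ j ∈ range n, d j) atTop (nhds L) :=
    hsum.hasSum.tendsto_sum_nat
  -- key identity: S n = (k/a) * harmonic n - T n
  have hkey : ∀ n : ℕ, (∑ i ∈ Icc 1 n, (k : ℝ) / (τ i : ℝ))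
      = ((k:ℝ)/a) * ((harmonic n : ℝ)) - ∑ j ∈ range n, d j := by
    intro n
    have hIcc : (∑ i ∈ Icc 1 n, (k : ℝ) / (τ i : ℝ))
        = ∑ j ∈ range n, (k : ℝ) / (a * (j+1) + τ0) := by
      rw [← Finset.Ico_add_one_right_eq_Icc, Finset.sum_Ico_eq_sum_range]
      apply Finset.sum_congr rfl
      intro j _
      rw [hτR]
      push_cast
      ring_nf
    have hharm : ((harmonic n : ℝ)) = ∑ j ∈ range n, ((j:ℝ)+1)⁻¹ := by
      rw [harmonic]
      push_cast
      rfl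
    rw [hIcc, hharm, Finset.mul_sum, ← Finset.sum_sub_distrib]
    apply Finset.sum_congr rfl
    intro j _
    rw [hd]
    have h1 : (0:ℝ) < (j:ℝ)+1 := by positivity
    field_simp
    ring
  -- convergence of ED n - C * log n
  set C : ℝ := T0 * (k:ℝ) / a with hC
  have hconv : Tendsto (fun n : ℕ => ED n - C * Real.log n) atTop
      (nhds (T0 * ((k:ℝ)/a) * Real.eulerMascheroniConstant - T0 * L + D0)) := by
    have h1 : ∀ n : ℕ, ED n - C * Real.log n
        = T0 * ((k:ℝ)/a) * ((harmonic n : ℝ) - Real.log n) - T0 * (∑ j ∈ range n, d j) + D0 := by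
      intro n
      rw [hED n, hkey n, hC]
      ring
    simp only [h1]
    exact (((Real.tendsto_harmonic_sub_log).const_mul _).sub (hTconv.const_mul _)).add_const _
  have hlog : Tendsto (fun n : ℕ => Real.log n) atTop atTop :=
    Real.tendsto_log_atTop.comp tendsto_natCast_atTop_atTop
  have hmain : Tendsto (fun n : ℕ => ED n / Real.log n) atTop (nhds C) := by
    have h0 : Tendsto (fun n : ℕ => (ED n - C * Real.log n) / Real.log n + C) atTop
        (nhds (0 + C)) := (hconv.div_atTop hlog).add_const C
    rw [zero_add] at h0
    apply h0.congr'
    filter_upwards [hlog.eventually_gt_atTop 0] with n hn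
    field_simp
    ring
  rw [hC, ha] at hmain
  exact hmain
end
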